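/- arXiv:2207.06536 — 4 statements merged into one kernel-verified Lean document; each statement's English description precedes it below -/
import Mathlib

section
/- Let L : H₁ → H₂ be a linear map between inner product spaces and let ψ₁, ψ₂ be vectors such that for each ψ ∈ {ψ₁, ψ₂, ψ₁+ψ₂, ψ₁−ψ₂, ψ₁+i·ψ₂, ψ₁−i·ψ₂} with ψ ≠ 0 we have (1−ε)·‖ψ‖ ≤ ‖L ψ‖ ≤ (1+ε)·‖ψ‖ for some 0 ≤ ε ≤ 1. Then |⟨ψ₂, L†L ψ₁⟩ − ⟨ψ₂, ψ₁⟩| ≤ √18 · ε. -/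
/-!
By polarization, the real and imaginary parts of `⟪L x, L y⟫ - ⟪x, y⟫` are quarter-differences
of the squared-norm defects `‖L ψ‖² - ‖ψ‖²` at `ψ = x ± y` and `ψ = x ∓ i y`. Each defect is at
most `3 ε ‖ψ‖²`, and by the parallelogram law the two relevant `‖ψ‖²` add up to
`2 (‖x‖² + ‖y‖²) = 4` for unit vectors, so both parts are at most `3 ε` and the modulus is at
most `3 √2 ε = √18 ε`.
-/

open Complex ComplexConjugate

noncomputable def normSqDefect {E F : Type*} [NormedAddCommGroup E] [NormedAddCommGroup F]
    [Module ℂ E] [Module ℂ F] (L : E →ₗ[ℂ] F) (ψ : E) : ℝ :=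
  ‖L ψ‖ ^ 2 - ‖ψ‖ ^ 2

theorem abs_sq_sub_sq_le_of_le_of_le {a n ε : ℝ} (hn : 0 ≤ n) (hε : ε ≤ 1)
    (ha₁ : (1 - ε) * n ≤ a) (ha₂ : a ≤ (1 + ε) * n) :
    |a ^ 2 - n ^ 2| ≤ 3 * ε * n ^ 2 := by
  rw [abs_le]
  constructor <;> nlinarith [mul_nonneg (sub_nonneg.2 hε) hn]

section

variable {E F : Type*} [NormedAddCommGroup E] [InnerProductSpace ℂ E]
  [NormedAddCommGroup F] [InnerProductSpace ℂ F] (L : E →ₗ[ℂ] F)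

theorem abs_normSqDefect_le {ψ : E} {ε : ℝ} (hε : ε ≤ 1)
    (h : ψ ≠ 0 → (1 - ε) * ‖ψ‖ ≤ ‖L ψ‖ ∧ ‖L ψ‖ ≤ (1 + ε) * ‖ψ‖) :
    |normSqDefect L ψ| ≤ 3 * ε * ‖ψ‖ ^ 2 := by
  rcases eq_or_ne ψ 0 with rfl | hψ
  · simp [normSqDefect]
  · obtain ⟨h₁, h₂⟩ := h hψ
    exact abs_sq_sub_sq_le_of_le_of_le (norm_nonneg ψ) hε h₁ h₂

theorem re_inner_map_sub_inner (x y : E) :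
    (inner ℂ (L x) (L y) - inner ℂ x y).re =
      (normSqDefect L (x + y) - normSqDefect L (x - y)) / 4 := by
  have hE := re_inner_eq_norm_add_mul_self_sub_norm_sub_mul_self_div_four (𝕜 := ℂ) x y
  have hF := re_inner_eq_norm_add_mul_self_sub_norm_sub_mul_self_div_four (𝕜 := ℂ) (L x) (L y)
  simp only [RCLike.re_to_complex] at hE hF
  simp only [normSqDefect, sub_re, map_add, map_sub, hE, hF]
  ring

theorem im_inner_map_sub_inner (x y : E) :
    (inner ℂ (L x) (L y) - inner ℂ x y).im =
      (normSqDefect L (x - I • y) - normSqDefect L (x + I • y)) / 4 := by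
  have hE := im_inner_eq_norm_sub_i_smul_mul_self_sub_norm_add_i_smul_mul_self_div_four
    (𝕜 := ℂ) x y
  have hF := im_inner_eq_norm_sub_i_smul_mul_self_sub_norm_add_i_smul_mul_self_div_four
    (𝕜 := ℂ) (L x) (L y)
  simp only [RCLike.im_to_complex, RCLike.I_to_complex] at hE hF
  simp only [normSqDefect, sub_im, map_add, map_sub, map_smul, hE, hF]
  ring

theorem abs_re_inner_map_sub_inner_le {x y : E} {c : ℝ}
    (hadd : |normSqDefect L (x + y)| ≤ c * ‖x + y‖ ^ 2)
    (hsub : |normSqDefect L (x - y)| ≤ c * ‖x - y‖ ^ 2) :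
    |(inner ℂ (L x) (L y) - inner ℂ x y).re| ≤ c / 2 * (‖x‖ ^ 2 + ‖y‖ ^ 2) := by
  have hpar := parallelogram_law_with_norm ℂ x y
  rw [re_inner_map_sub_inner, abs_div, abs_of_pos (four_pos (α := ℝ))]
  linarith [abs_sub (normSqDefect L (x + y)) (normSqDefect L (x - y)), congrArg (c * ·) hpar]

theorem abs_im_inner_map_sub_inner_le {x y : E} {c : ℝ}
    (hadd : |normSqDefect L (x + I • y)| ≤ c * ‖x + I • y‖ ^ 2)
    (hsub : |normSqDefect L (x - I • y)| ≤ c * ‖x - I • y‖ ^ 2) :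
    |(inner ℂ (L x) (L y) - inner ℂ x y).im| ≤ c / 2 * (‖x‖ ^ 2 + ‖y‖ ^ 2) := by
  have hpar := parallelogram_law_with_norm ℂ x (I • y)
  rw [norm_smul, norm_I, one_mul] at hpar
  rw [im_inner_map_sub_inner, abs_div, abs_of_pos (four_pos (α := ℝ))]
  linarith [abs_sub (normSqDefect L (x - I • y)) (normSqDefect L (x + I • y)),
    congrArg (c * ·) hpar]

theorem norm_inner_map_sub_inner_le {x y : E} {c : ℝ}
    (h : ∀ ψ ∈ ({x + y, x - y, x + I • y, x - I • y} : Set E),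
      |normSqDefect L ψ| ≤ c * ‖ψ‖ ^ 2) :
    ‖inner ℂ (L x) (L y) - inner ℂ x y‖ ≤ √2 * (c / 2 * (‖x‖ ^ 2 + ‖y‖ ^ 2)) := by
  have hre := abs_re_inner_map_sub_inner_le L (h (x + y) (by simp)) (h (x - y) (by simp))
  have him :=
    abs_im_inner_map_sub_inner_le L (h (x + I • y) (by simp)) (h (x - I • y) (by simp))
  exact (norm_le_sqrt_two_mul_max _).trans (by gcongr; exact max_le hre him)

end

theorem overlap_from_norms_general {H₁ H₂ : Type*}
    [NormedAddCommGroup H₁] [InnerProductSpace ℂ H₁]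
    [NormedAddCommGroup H₂] [InnerProductSpace ℂ H₂]
    (L : H₁ →ₗ[ℂ] H₂) (ψ₁ ψ₂ : H₁) (hψ₁ : ‖ψ₁‖ = 1) (hψ₂ : ‖ψ₂‖ = 1)
    (ε : ℝ) (hε1 : ε ≤ 1)
    (hL : ∀ ψ ∈ ({ψ₁, ψ₂, ψ₁ + ψ₂, ψ₁ - ψ₂,
        ψ₁ + Complex.I • ψ₂, ψ₁ - Complex.I • ψ₂} : Set H₁), ψ ≠ 0 →
      (1 - ε) * ‖ψ‖ ≤ ‖L ψ‖ ∧ ‖L ψ‖ ≤ (1 + ε) * ‖ψ‖) :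
    ‖(inner ℂ (L ψ₂) (L ψ₁) : ℂ) - (inner ℂ ψ₂ ψ₁ : ℂ)‖ ≤ Real.sqrt 18 * ε := by
  have hdefect : ∀ ψ ∈ ({ψ₁ + ψ₂, ψ₁ - ψ₂, ψ₁ + I • ψ₂, ψ₁ - I • ψ₂} : Set H₁),
      |normSqDefect L ψ| ≤ 3 * ε * ‖ψ‖ ^ 2 := fun ψ hψ =>
    abs_normSqDefect_le L hε1 (hL ψ (Set.mem_insert_of_mem _ (Set.mem_insert_of_mem _ hψ)))
  have hswap : inner ℂ (L ψ₂) (L ψ₁) - inner ℂ ψ₂ ψ₁ =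
      conj (inner ℂ (L ψ₁) (L ψ₂) - inner ℂ ψ₁ ψ₂) := by
    rw [map_sub, inner_conj_symm, inner_conj_symm]
  have hsqrt : √18 = 3 * √2 := by
    rw [show (18 : ℝ) = 3 ^ 2 * 2 by norm_num, Real.sqrt_mul (by norm_num),
      Real.sqrt_sq (by norm_num)]
  calc ‖inner ℂ (L ψ₂) (L ψ₁) - inner ℂ ψ₂ ψ₁‖
      = ‖inner ℂ (L ψ₁) (L ψ₂) - inner ℂ ψ₁ ψ₂‖ := by rw [hswap, RCLike.norm_conj]
    _ ≤ √2 * (3 * ε / 2 * (‖ψ₁‖ ^ 2 + ‖ψ₂‖ ^ 2)) := norm_inner_map_sub_inner_le L hdefect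
    _ = √18 * ε := by rw [hψ₁, hψ₂, hsqrt]; ring

/-- Lemma "overnorm": if a linear map `L` approximately preserves (to relative accuracy `ε`)
the norms of the six states `ψ₁, ψ₂, ψ₁ ± ψ₂, ψ₁ ± i·ψ₂`, then it preserves the inner
product of the states `ψ₁`, `ψ₂` up to error `√18 · ε`. -/
theorem overlap_from_norms {H₁ H₂ : Type*}
    [NormedAddCommGroup H₁] [InnerProductSpace ℂ H₁]
    [NormedAddCommGroup H₂] [InnerProductSpace ℂ H₂]
    (L : H₁ →ₗ[ℂ] H₂) (ψ₁ ψ₂ : H₁) (hψ₁ : ‖ψ₁‖ = 1) (hψ₂ : ‖ψ₂‖ = 1)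
    (ε : ℝ) (hε0 : 0 ≤ ε) (hε1 : ε ≤ 1)
    (hL : ∀ ψ ∈ ({ψ₁, ψ₂, ψ₁ + ψ₂, ψ₁ - ψ₂,
        ψ₁ + Complex.I • ψ₂, ψ₁ - Complex.I • ψ₂} : Set H₁), ψ ≠ 0 →
      (1 - ε) * ‖ψ‖ ≤ ‖L ψ‖ ∧ ‖L ψ‖ ≤ (1 + ε) * ‖ψ‖) :
    ‖(inner ℂ (L ψ₂) (L ψ₁) : ℂ) - (inner ℂ ψ₂ ψ₁ : ℂ)‖ ≤ Real.sqrt 18 * ε :=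
  overlap_from_norms_general L ψ₁ ψ₂ hψ₁ hψ₂ ε hε1 hL
end

section
/- Let (X, d, μ) be a metric probability space satisfying a logarithmic Sobolev inequality with constant C > 0, i.e. E[f² log(f²/E[f²])] ≤ 2C·E[|∇f|²] for all locally Lipschitz f, where |∇f|(x) = limsup_{y→x} |f(y)−f(x)|/d(x,y). Then every κ-Lipschitz F : X → ℝ with E[F] < ∞ satisfies Pr[F ≥ E[F] + ε] ≤ exp(−ε²/(2Cκ²)). -/
/-!
Herbst's argument. For a κ-Lipschitz `g` with all exponential moments, let `K` be its cumulant
generating function. The log-Sobolev inequality applied to `exp (t g / 2)`, whose local gradient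
is at most `(t / 2) κ exp (t g / 2)`, is exactly the differential inequality
`t K'(t) - K(t) ≤ C κ² t² / 2`, i.e. `(K(t) / t)' ≤ C κ² / 2`. As `K(t) / t → K'(0) = E[g]` when
`t → 0⁺`, this integrates to `K(t) ≤ t E[g] + C κ² t² / 2`, and the Chernoff bound at
`t = ε / (C κ²)` gives the tail estimate. A general integrable `F` is truncated at `±n`, which
keeps it κ-Lipschitz and bounded, and the bounds for the truncations pass to the limit `n → ∞`.
-/

open MeasureTheory Filter
open scoped NNReal ENNReal

/-- The local gradient modulus `|∇f|(x) = limsup_{y→x} |f(y)−f(x)|/d(x,y)`. -/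
noncomputable def gradNorm {X : Type*} [MetricSpace X] (f : X → ℝ) (x : X) : ℝ :=
  Filter.limsup (fun y => |f y - f x| / dist y x) (nhdsWithin x {x}ᶜ)

open Real ProbabilityTheory Topology Set

section GradNorm

variable {X : Type*} [MetricSpace X]

lemma abs_gradNorm_le {f : X → ℝ} {x : X} {b : ℝ} (hb : 0 ≤ b)
    (h : ∀ᶠ y in 𝓝[≠] x, |f y - f x| / dist y x ≤ b) : |gradNorm f x| ≤ b := by
  rcases (𝓝[≠] x).eq_or_neBot with hbot | _
  · have : gradNorm f x = 0 := by
      simp [gradNorm, hbot, limsup, limsSup]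
    simpa [this] using hb
  · have hnonneg : ∀ᶠ y in 𝓝[≠] x, 0 ≤ |f y - f x| / dist y x :=
      Eventually.of_forall fun y => by positivity
    rw [abs_le]
    constructor
    · exact (neg_nonpos.mpr hb).trans
        (le_limsup_of_frequently_le hnonneg.frequently (isBoundedUnder_of_eventually_le h))
    · exact limsup_le_of_le (.of_frequently_ge hnonneg.frequently) h

lemma abs_gradNorm_comp_le {φ : ℝ → ℝ} {φ' : ℝ} {g : X → ℝ} {κ : ℝ≥0}
    (hg : LipschitzWith κ g) {x : X} (hφ : HasDerivAt φ φ' (g x)) :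
    |gradNorm (fun y => φ (g y)) x| ≤ |φ'| * κ := by
  have hlim : Tendsto (fun δ => (|φ'| + δ) * κ) (𝓝[>] 0) (𝓝 (|φ'| * κ)) := by
    have : Continuous (fun δ : ℝ => (|φ'| + δ) * κ) := by fun_prop
    simpa using (this.tendsto 0).mono_left nhdsWithin_le_nhds
  refine ge_of_tendsto hlim (eventually_nhdsWithin_of_forall fun δ (hδ : 0 < δ) => ?_)
  refine abs_gradNorm_le (by positivity) ?_
  have hφδ := (hasDerivAt_iff_isLittleO.mp hφ).def hδ
  have hgx : Tendsto g (𝓝[≠] x) (𝓝 (g x)) :=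
    hg.continuous.continuousAt.mono_left nhdsWithin_le_nhds
  filter_upwards [hgx.eventually hφδ] with y hy
  have hgy : |g y - g x| ≤ κ * dist y x := by simpa [Real.dist_eq] using hg.dist_le_mul y x
  refine div_le_of_le_mul₀ dist_nonneg (by positivity) ?_
  simp only [Real.norm_eq_abs, smul_eq_mul] at hy
  calc |φ (g y) - φ (g x)|
      ≤ |φ (g y) - φ (g x) - (g y - g x) * φ'| + |g y - g x| * |φ'| := by
        linarith [abs_sub_abs_le_abs_sub (φ (g y) - φ (g x)) ((g y - g x) * φ'),
          abs_mul (g y - g x) φ']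
    _ ≤ (|φ'| + δ) * |g y - g x| := by linarith
    _ ≤ (|φ'| + δ) * κ * dist y x := by rw [mul_assoc]; gcongr

lemma sq_gradNorm_exp_mul_le {g : X → ℝ} {κ : ℝ≥0} (hg : LipschitzWith κ g) (a : ℝ) (x : X) :
    gradNorm (fun y => exp (a * g y)) x ^ 2 ≤ a ^ 2 * κ ^ 2 * exp (a * g x) ^ 2 := by
  have hφ : HasDerivAt (fun u => exp (a * u)) (exp (a * g x) * a) (g x) := by
    simpa using ((hasDerivAt_id (g x)).const_mul a).exp
  calc gradNorm (fun y => exp (a * g y)) x ^ 2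
      = |gradNorm (fun y => exp (a * g y)) x| ^ 2 := (sq_abs _).symm
    _ ≤ (|exp (a * g x) * a| * κ) ^ 2 :=
        pow_le_pow_left₀ (abs_nonneg _) (abs_gradNorm_comp_le hg hφ) 2
    _ = a ^ 2 * κ ^ 2 * exp (a * g x) ^ 2 := by rw [mul_pow, sq_abs]; ring

end GradNorm

lemma le_deriv_zero_mul_add_of_mul_deriv_sub_le {K : ℝ → ℝ} {c : ℝ}
    (hK : ∀ s, 0 ≤ s → DifferentiableAt ℝ K s) (hK0 : K 0 = 0)
    (h : ∀ s, 0 < s → s * deriv K s - K s ≤ c * s ^ 2) {t : ℝ} (ht : 0 < t) :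
    K t ≤ deriv K 0 * t + c * t ^ 2 := by
  set ψ : ℝ → ℝ := fun s => K s / s - c * s
  have hψ : ∀ s, 0 < s → HasDerivAt ψ ((deriv K s * s - K s * 1) / s ^ 2 - c) s := fun s hs =>
    (((hK s hs.le).hasDerivAt.div (hasDerivAt_id s) hs.ne').sub
      ((hasDerivAt_id s).const_mul c)).congr_deriv (by simp)
  have hanti : AntitoneOn ψ (Ioi 0) := by
    refine antitoneOn_of_hasDerivWithinAt_nonpos (convex_Ioi 0)
      (fun s hs => (hψ s hs).continuousAt.continuousWithinAt)
      (fun s hs => (hψ s (interior_subset hs)).hasDerivWithinAt) fun s hs => ?_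
    have hs : 0 < s := interior_subset hs
    rw [sub_nonpos, div_le_iff₀ (by positivity)]
    linarith [h s hs]
  have hlim : Tendsto ψ (𝓝[>] 0) (𝓝 (deriv K 0)) := by
    have hslope := (hK 0 le_rfl).hasDerivAt.tendsto_slope_zero_right
    have hcs : Tendsto (fun s : ℝ => c * s) (𝓝[>] 0) (𝓝 0) := by
      simpa using ((continuous_const_mul c).tendsto 0).mono_left nhdsWithin_le_nhds
    simpa [ψ, hK0, div_eq_inv_mul] using hslope.sub hcs
  have hψt : ψ t ≤ deriv K 0 :=
    ge_of_tendsto hlim <|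
      Filter.mem_of_superset (Ioo_mem_nhdsGT ht) fun s hs => hanti hs.1 ht hs.2.le
  have : K t / t ≤ deriv K 0 + c * t := by linarith [show ψ t = K t / t - c * t from rfl]
  rw [div_le_iff₀ ht] at this
  linarith

lemma measureReal_ge_le_of_cgf_le {Ω : Type*} [MeasurableSpace Ω] {μ : Measure Ω}
    [IsFiniteMeasure μ] {X : Ω → ℝ} {m v : ℝ} (hv : 0 < v)
    (hexp : ∀ t, 0 < t → Integrable (fun ω => exp (t * X ω)) μ)
    (hcgf : ∀ t, 0 < t → cgf X μ t ≤ m * t + v * t ^ 2 / 2) {ε : ℝ} (hε : 0 < ε) :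
    μ.real {ω | m + ε ≤ X ω} ≤ exp (-ε ^ 2 / (2 * v)) := by
  have ht : 0 < ε / v := by positivity
  calc μ.real {ω | m + ε ≤ X ω}
      ≤ exp (-(ε / v) * (m + ε) + cgf X μ (ε / v)) :=
        measure_ge_le_exp_cgf _ ht.le (hexp _ ht)
    _ ≤ exp (-(ε / v) * (m + ε) + (m * (ε / v) + v * (ε / v) ^ 2 / 2)) := by
        gcongr; exact hcgf _ ht
    _ = exp (-ε ^ 2 / (2 * v)) := by congr 1; field_simp; ring

lemma integral_exp_mul_log_div_mgf {Ω : Type*} [MeasurableSpace Ω] {μ : Measure Ω}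
    [IsProbabilityMeasure μ] {g : Ω → ℝ} (hexp : ∀ t, Integrable (fun x => exp (t * g x)) μ)
    (t : ℝ) :
    ∫ x, exp (t * g x) * log (exp (t * g x) / mgf g μ t) ∂μ
      = mgf g μ t * (t * deriv (cgf g μ) t - cgf g μ t) := by
  have ht : t ∈ interior (integrableExpSet g μ) := by simp [integrableExpSet, hexp]
  have hZ : 0 < mgf g μ t := mgf_pos (hexp t)
  have hgexp := integrable_pow_mul_exp_of_mem_interior_integrableExpSet ht 1
  simp only [pow_one] at hgexp
  calc ∫ x, exp (t * g x) * log (exp (t * g x) / mgf g μ t) ∂μ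
      = ∫ x, t * (g x * exp (t * g x)) - log (mgf g μ t) * exp (t * g x) ∂μ :=
        integral_congr_ae (ae_of_all _ fun x => by
          dsimp only
          rw [log_div (exp_pos _).ne' hZ.ne', log_exp]; ring)
    _ = _ := by
        rw [integral_sub (hgexp.const_mul t) ((hexp t).const_mul _), integral_const_mul,
          integral_const_mul, deriv_cgf ht, cgf]
        change t * _ - _ * mgf g μ t = _
        field_simp

def SatisfiesLogSobolev {X : Type*} [MetricSpace X] [MeasurableSpace X] (μ : Measure X)
    (C : ℝ) : Prop :=
  ∀ f : X → ℝ, LocallyLipschitz f →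
    ∫ x, f x ^ 2 * Real.log (f x ^ 2 / ∫ y, f y ^ 2 ∂μ) ∂μ
      ≤ 2 * C * ∫ x, gradNorm f x ^ 2 ∂μ

section LogSobolev

variable {X : Type*} [MetricSpace X] [MeasurableSpace X] {μ : Measure X} [IsProbabilityMeasure μ]
  {C : ℝ} {κ : ℝ≥0} {g : X → ℝ}

lemma mul_deriv_cgf_sub_cgf_le (hLSI : SatisfiesLogSobolev μ C) (hC : 0 ≤ C)
    (hg : LipschitzWith κ g) (hexp : ∀ t, Integrable (fun x => exp (t * g x)) μ) (t : ℝ) :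
    t * deriv (cgf g μ) t - cgf g μ t ≤ C * κ ^ 2 * t ^ 2 / 2 := by
  set f : X → ℝ := fun x => exp (t / 2 * g x)
  have hf_sq (x : X) : f x ^ 2 = exp (t * g x) := by
    rw [← exp_nat_mul]; push_cast; ring_nf
  have hf_lip : LocallyLipschitz f :=
    (ContDiff.locallyLipschitz (f := fun u : ℝ => exp (t / 2 * u)) (by fun_prop)).comp
      hg.locallyLipschitz
  have hgrad : ∫ x, gradNorm f x ^ 2 ∂μ ≤ t ^ 2 / 4 * κ ^ 2 * mgf g μ t := by
    rw [mgf, ← integral_const_mul]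
    refine integral_mono_of_nonneg (ae_of_all _ fun x => sq_nonneg _) ((hexp t).const_mul _)
      (ae_of_all _ fun x => ?_)
    refine (sq_gradNorm_exp_mul_le hg (t / 2) x).trans_eq ?_
    dsimp only
    rw [← hf_sq x]; ring
  have hLSI_f := (hLSI f hf_lip).trans (mul_le_mul_of_nonneg_left hgrad (by positivity))
  simp only [hf_sq] at hLSI_f
  rw [← mgf, integral_exp_mul_log_div_mgf hexp t] at hLSI_f
  exact le_of_mul_le_mul_left (hLSI_f.trans_eq (by ring)) (mgf_pos (hexp t))

lemma cgf_le_of_logSobolev (hLSI : SatisfiesLogSobolev μ C) (hC : 0 ≤ C)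
    (hg : LipschitzWith κ g) (hexp : ∀ t, Integrable (fun x => exp (t * g x)) μ)
    {t : ℝ} (ht : 0 < t) : cgf g μ t ≤ μ[g] * t + C * κ ^ 2 * t ^ 2 / 2 := by
  have hint : ∀ s, s ∈ interior (integrableExpSet g μ) := by simp [integrableExpSet, hexp]
  have := le_deriv_zero_mul_add_of_mul_deriv_sub_le (c := C * κ ^ 2 / 2)
    (fun s _ => (analyticAt_cgf (hint s)).differentiableAt) cgf_zero
    (fun s _ => (mul_deriv_cgf_sub_cgf_le hLSI hC hg hexp s).trans_eq (by ring)) ht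
  rw [deriv_cgf_zero (hint 0), probReal_univ, div_one] at this
  linarith

lemma measure_ge_le_of_logSobolev (hLSI : SatisfiesLogSobolev μ C) (hC : 0 < C) (hκ : 0 < κ)
    (hg : LipschitzWith κ g) (hexp : ∀ t, Integrable (fun x => exp (t * g x)) μ)
    {ε : ℝ} (hε : 0 < ε) :
    μ {x | μ[g] + ε ≤ g x} ≤ ENNReal.ofReal (exp (-ε ^ 2 / (2 * C * κ ^ 2))) := by
  rw [← ofReal_measureReal, mul_assoc]
  exact ENNReal.ofReal_le_ofReal <| measureReal_ge_le_of_cgf_le (by positivity)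
    (fun t _ => hexp t) (fun t ht => cgf_le_of_logSobolev hLSI hC.le hg hexp ht) hε

end LogSobolev

lemma tendsto_integral_max_min {Ω : Type*} [MeasurableSpace Ω] {μ : Measure Ω} {F : Ω → ℝ}
    (hF : Integrable F μ) :
    Tendsto (fun n : ℕ => ∫ x, max (-n : ℝ) (min (F x) n) ∂μ) atTop (𝓝 (∫ x, F x ∂μ)) := by
  refine tendsto_integral_of_dominated_convergence (fun x => |F x|)
    (fun n =>
      (aemeasurable_const.max (hF.aemeasurable.min aemeasurable_const)).aestronglyMeasurable)
    hF.abs (fun n => ae_of_all _ fun x => ?_) (ae_of_all _ fun x => ?_)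
  · rw [Real.norm_eq_abs, abs_le]
    constructor <;> grind [abs_le]
  · refine tendsto_atTop_of_eventually_const (i₀ := ⌈|F x|⌉₊) fun n hn => ?_
    have := abs_le.mp ((Nat.le_ceil _).trans (Nat.cast_le.mpr hn))
    rw [min_eq_left this.2, max_eq_right this.1]

/-- Herbst's lemma: a metric probability space satisfying a logarithmic Sobolev
inequality with constant `C > 0` has sub-Gaussian concentration for Lipschitz functions:
`Pr[F ≥ E[F] + ε] ≤ exp(−ε²/(2Cκ²))`. -/
theorem herbst {X : Type*} [MetricSpace X] [MeasurableSpace X] [BorelSpace X]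
    (μ : Measure X) [IsProbabilityMeasure μ] (C : ℝ) (hC : 0 < C)
    (hLSI : ∀ f : X → ℝ, LocallyLipschitz f →
      ∫ x, f x ^ 2 * Real.log (f x ^ 2 / ∫ y, f y ^ 2 ∂μ) ∂μ
        ≤ 2 * C * ∫ x, gradNorm f x ^ 2 ∂μ)
    (κ : ℝ≥0) (F : X → ℝ) (hF : LipschitzWith κ F) (hFint : Integrable F μ)
    (ε : ℝ) (hε : 0 < ε) :
    μ {x | (∫ y, F y ∂μ) + ε ≤ F x}
      ≤ ENNReal.ofReal (Real.exp (-ε ^ 2 / (2 * C * (κ : ℝ) ^ 2))) := by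
  rcases eq_zero_or_pos κ with rfl | hκ
  · simpa using prob_le_one
  set m := ∫ y, F y ∂μ
  set T : ℕ → X → ℝ := fun n x => max (-n : ℝ) (min (F x) n)
  have hT_lip (n : ℕ) : LipschitzWith κ (T n) := (hF.min_const n).const_max (-n)
  have hT_exp (n : ℕ) (t : ℝ) : Integrable (fun x => exp (t * T n x)) μ :=
    integrable_exp_mul_of_mem_Icc (hT_lip n).continuous.aemeasurable (ae_of_all _ fun x =>
      ⟨le_max_left _ _, max_le (by simp) (min_le_right _ _)⟩)
  have hgap : Tendsto (fun n => m + ε - μ[T n]) atTop (𝓝 ε) := by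
    simpa [m] using (tendsto_const_nhds (x := m + ε)).sub (tendsto_integral_max_min hFint)
  have hbound : ∀ᶠ n in atTop, μ {x | m + ε ≤ F x} ≤
      ENNReal.ofReal (exp (-(m + ε - μ[T n]) ^ 2 / (2 * C * κ ^ 2))) := by
    filter_upwards [hgap.eventually (lt_mem_nhds hε),
      tendsto_natCast_atTop_atTop.eventually_ge_atTop (m + ε)] with n hn_gap hn
    calc μ {x | m + ε ≤ F x}
        ≤ μ {x | μ[T n] + (m + ε - μ[T n]) ≤ T n x} :=
          measure_mono fun x hx => by simpa [T] using le_max_of_le_right (le_min hx hn)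
      _ ≤ _ := measure_ge_le_of_logSobolev hLSI hC hκ (hT_lip n) (hT_exp n) hn_gap
  exact ge_of_tendsto
    ((ENNReal.continuous_ofReal.tendsto _).comp ((hgap.pow 2).neg.div_const _).rexp) hbound
end

section
/- For every nonnegative measurable function f with E[f²] < ∞ on a probability space, E[f² log(f²/E[f²])] = sup over measurable g with E[e^g] ≤ 1 of E[f² g]. -/
/-!
Write `F = f²` and `c = E[F]`. Integrating Young's inequality `a t ≤ a log (a / c) - a + c eᵗ`
bounds `E[F g]` by `E[F log (F / c)]` whenever `E[eᵍ] ≤ 1`. Conversely, the near-optimal tests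
`g = log (t F / c + 1 - t)` satisfy `E[eᵍ] = 1` and `F g ≥ F log (F / c) + F log t`; truncated at
height `n` they are admissible, so by monotone convergence a bounded set of values `E[F g]` forces
`F log (F / c)` to be integrable with integral at most their supremum. If it is not integrable,
both sides are `0`: the Bochner integral and the `sSup` of a set unbounded above take the junk
value `0`.
-/

open MeasureTheory Filter Topology Real

theorem mul_le_mul_log_div_sub_add_mul_exp {a c : ℝ} (ha : 0 ≤ a) (hc : 0 < c) (t : ℝ) :
    a * t ≤ a * log (a / c) - a + c * exp t := by
  rcases ha.eq_or_lt with rfl | ha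
  · simpa using mul_nonneg hc.le (exp_pos t).le
  · have h := add_one_le_exp (t - log (a / c))
    rw [exp_sub, exp_log (by positivity)] at h
    have h' := mul_le_mul_of_nonneg_left h ha.le
    rw [show a * (exp t / (a / c)) = c * exp t by field_simp] at h'
    linarith

theorem MeasureTheory.integrable_of_tendsto_of_monotone {α : Type*} [MeasurableSpace α]
    {μ : Measure α} {f : ℕ → α → ℝ} {F : α → ℝ} {M : ℝ} (hf : ∀ n, Integrable (f n) μ)
    (hF : AEStronglyMeasurable F μ) (h_mono : ∀ᵐ x ∂μ, Monotone fun n ↦ f n x)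
    (h_tendsto : ∀ᵐ x ∂μ, Tendsto (fun n ↦ f n x) atTop (𝓝 (F x)))
    (h_bdd : ∀ n, ∫ x, f n x ∂μ ≤ M) : Integrable F μ := by
  have hf_nonneg (n : ℕ) : 0 ≤ᵐ[μ] fun x ↦ f n x - f 0 x := by
    filter_upwards [h_mono] with x hx using sub_nonneg.2 (hx (Nat.zero_le n))
  have hF_nonneg : 0 ≤ᵐ[μ] fun x ↦ F x - f 0 x := by
    filter_upwards [h_tendsto, h_mono] with x hx hmono
    exact sub_nonneg.2 (ge_of_tendsto' hx fun n ↦ hmono (Nat.zero_le n))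
  have hlim : Tendsto (fun n ↦ ∫⁻ x, ENNReal.ofReal (f n x - f 0 x) ∂μ) atTop
      (𝓝 (∫⁻ x, ENNReal.ofReal (F x - f 0 x) ∂μ)) := by
    refine lintegral_tendsto_of_tendsto_of_monotone
      (fun n ↦ ((hf n).sub (hf 0)).aemeasurable.ennreal_ofReal) ?_ ?_
    · filter_upwards [h_mono] with x hx n m hnm
      exact ENNReal.ofReal_le_ofReal (sub_le_sub_right (hx hnm) _)
    · filter_upwards [h_tendsto] with x hx
      exact (ENNReal.continuous_ofReal.tendsto _).comp (hx.sub_const _)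
  have hbound : ∫⁻ x, ENNReal.ofReal (F x - f 0 x) ∂μ ≤
      ENNReal.ofReal (M - ∫ x, f 0 x ∂μ) := by
    refine le_of_tendsto' hlim fun n ↦ ?_
    rw [← ofReal_integral_eq_lintegral_ofReal (f := fun x ↦ f n x - f 0 x)
      ((hf n).sub (hf 0)) (hf_nonneg n), integral_sub (hf n) (hf 0)]
    exact ENNReal.ofReal_le_ofReal (sub_le_sub_right (h_bdd n) _)
  have hG : Integrable (fun x ↦ F x - f 0 x) μ :=
    (lintegral_ofReal_ne_top_iff_integrable (hF.sub (hf 0).1) hF_nonneg).1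
      (ne_top_of_le_ne_top ENNReal.ofReal_ne_top hbound)
  exact (hG.add (hf 0)).congr (ae_of_all _ fun x ↦ sub_add_cancel (F x) (f 0 x))

def entropyDualValues {Ω : Type*} [MeasurableSpace Ω] (μ : Measure Ω) (F : Ω → ℝ) : Set ℝ :=
  {r | ∃ g : Ω → ℝ, Measurable g ∧ Integrable (fun x => exp (g x)) μ ∧
    Integrable (fun x => F x * g x) μ ∧ (∫ x, exp (g x) ∂μ) ≤ 1 ∧ r = ∫ x, F x * g x ∂μ}

-- The log-density, with respect to `μ`, of the mixture `t • (F / c) • μ + (1 - t) • μ`.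
noncomputable def mixLog {Ω : Type*} (F : Ω → ℝ) (c t : ℝ) (x : Ω) : ℝ :=
  log (t * (F x / c) + (1 - t))

section

variable {Ω : Type*} {F : Ω → ℝ} {c t : ℝ}

theorem exp_mixLog (hF0 : 0 ≤ F) (hc0 : 0 < c) (ht0 : 0 ≤ t) (ht1 : t < 1) (x : Ω) :
    exp (mixLog F c t x) = t * (F x / c) + (1 - t) := by
  have : 0 ≤ t * (F x / c) := mul_nonneg ht0 (div_nonneg (hF0 x) hc0.le)
  exact exp_log (by linarith)

theorem log_one_sub_le_mixLog (hF0 : 0 ≤ F) (hc0 : 0 < c) (ht0 : 0 ≤ t) (ht1 : t < 1) (x : Ω) :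
    log (1 - t) ≤ mixLog F c t x :=
  log_le_log (by linarith) (le_add_of_nonneg_left (mul_nonneg ht0 (div_nonneg (hF0 x) hc0.le)))

theorem mul_log_div_add_mul_log_le_mul_mixLog (hF0 : 0 ≤ F) (hc0 : 0 < c) (ht0 : 0 < t)
    (ht1 : t < 1) (x : Ω) :
    F x * log (F x / c) + F x * log t ≤ F x * mixLog F c t x := by
  rcases (hF0 x).eq_or_lt with h | h
  · simp [← h]
  · have : 0 < F x := h
    rw [← mul_add, ← log_mul (by positivity) ht0.ne', mixLog]
    gcongr
    linarith

variable [MeasurableSpace Ω] {μ : Measure Ω}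

theorem le_integral_mul_log_of_mem_entropyDualValues (hF0 : 0 ≤ F) (hFi : Integrable F μ)
    (hc : ∫ x, F x ∂μ = c) (hc0 : 0 < c) (hΦ : Integrable (fun x => F x * log (F x / c)) μ)
    {r : ℝ} (hr : r ∈ entropyDualValues μ F) : r ≤ ∫ x, F x * log (F x / c) ∂μ := by
  obtain ⟨g, -, hexp, hFg, hexp_le, rfl⟩ := hr
  have hsub : Integrable (fun x => F x * log (F x / c) - F x) μ := hΦ.sub hFi
  have hbound : Integrable (fun x => F x * log (F x / c) - F x + c * exp (g x)) μ :=
    hsub.add (hexp.const_mul c)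
  calc ∫ x, F x * g x ∂μ ≤ ∫ x, (F x * log (F x / c) - F x + c * exp (g x)) ∂μ :=
        integral_mono hFg hbound fun x => mul_le_mul_log_div_sub_add_mul_exp (hF0 x) hc0 (g x)
    _ = ∫ x, F x * log (F x / c) ∂μ - c + c * ∫ x, exp (g x) ∂μ := by
        rw [integral_add hsub (hexp.const_mul c), integral_sub hΦ hFi,
          integral_const_mul, hc]
    _ ≤ ∫ x, F x * log (F x / c) ∂μ := by nlinarith

theorem measurable_mixLog (hFm : Measurable F) : Measurable (mixLog F c t) :=
  (((hFm.div_const c).const_mul t).add_const _).log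

theorem integrable_mul_min_mixLog (hF0 : 0 ≤ F) (hFm : Measurable F) (hFi : Integrable F μ)
    (hc0 : 0 < c) (ht0 : 0 ≤ t) (ht1 : t < 1) (n : ℕ) :
    Integrable (fun x => F x * min (mixLog F c t x) n) μ := by
  refine integrable_of_le_of_le (g₁ := fun x => F x * log (1 - t)) (g₂ := fun x => F x * n)
    (hFm.mul ((measurable_mixLog hFm).min measurable_const)).aestronglyMeasurable
    (ae_of_all _ fun x => ?_) (ae_of_all _ fun x => ?_) (hFi.mul_const _) (hFi.mul_const _)
  · refine mul_le_mul_of_nonneg_left (le_min (log_one_sub_le_mixLog hF0 hc0 ht0 ht1 x) ?_) (hF0 x)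
    exact (log_nonpos (by linarith) (by linarith)).trans n.cast_nonneg
  · exact mul_le_mul_of_nonneg_left (min_le_right _ _) (hF0 x)

theorem integral_mul_min_mixLog_mem_entropyDualValues [IsProbabilityMeasure μ] (hF0 : 0 ≤ F)
    (hFm : Measurable F) (hFi : Integrable F μ) (hc : ∫ x, F x ∂μ = c) (hc0 : 0 < c)
    (ht0 : 0 ≤ t) (ht1 : t < 1) (n : ℕ) :
    ∫ x, F x * min (mixLog F c t x) n ∂μ ∈ entropyDualValues μ F := by
  have hgm : Measurable fun x => min (mixLog F c t x) n :=
    (measurable_mixLog hFm).min measurable_const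
  have hexp_le (x : Ω) : exp (min (mixLog F c t x) n) ≤ t * (F x / c) + (1 - t) :=
    (exp_le_exp.2 (min_le_left _ _)).trans (exp_mixLog hF0 hc0 ht0 ht1 x).le
  have hmix : Integrable (fun x => t * (F x / c) + (1 - t)) μ :=
    ((hFi.div_const c).const_mul t).add (integrable_const _)
  have hexp : Integrable (fun x => exp (min (mixLog F c t x) n)) μ :=
    integrable_of_le_of_le (g₁ := 0) (measurable_exp.comp hgm).aestronglyMeasurable
      (ae_of_all _ fun x => (exp_pos _).le) (ae_of_all _ hexp_le) (integrable_zero _ _ _) hmix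
  refine ⟨_, hgm, hexp, integrable_mul_min_mixLog hF0 hFm hFi hc0 ht0 ht1 n, ?_, rfl⟩
  calc ∫ x, exp (min (mixLog F c t x) n) ∂μ ≤ ∫ x, (t * (F x / c) + (1 - t)) ∂μ :=
        integral_mono hexp hmix hexp_le
    _ = 1 := by
        rw [integral_add ((hFi.div_const c).const_mul t) (integrable_const _), integral_const_mul,
          integral_div, hc, integral_const, probReal_univ, one_smul, div_self hc0.ne']
        ring

theorem integrable_mul_mixLog_and_le_of_forall_le [IsProbabilityMeasure μ] (hF0 : 0 ≤ F)
    (hFm : Measurable F) (hFi : Integrable F μ) (hc : ∫ x, F x ∂μ = c) (hc0 : 0 < c)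
    (ht0 : 0 ≤ t) (ht1 : t < 1) {M : ℝ} (hM : ∀ r ∈ entropyDualValues μ F, r ≤ M) :
    Integrable (fun x => F x * mixLog F c t x) μ ∧ ∫ x, F x * mixLog F c t x ∂μ ≤ M := by
  have hint (n : ℕ) := integrable_mul_min_mixLog hF0 hFm hFi hc0 ht0 ht1 n
  have hle (n : ℕ) :=
    hM _ (integral_mul_min_mixLog_mem_entropyDualValues hF0 hFm hFi hc hc0 ht0 ht1 n)
  have h_mono (x : Ω) : Monotone fun n : ℕ => F x * min (mixLog F c t x) n :=
    fun n m hnm => mul_le_mul_of_nonneg_left (min_le_min_left _ (by exact_mod_cast hnm)) (hF0 x)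
  have h_tendsto (x : Ω) :
      Tendsto (fun n : ℕ => F x * min (mixLog F c t x) n) atTop (𝓝 (F x * mixLog F c t x)) := by
    obtain ⟨N, hN⟩ := exists_nat_ge (mixLog F c t x)
    refine tendsto_const_nhds.congr' ?_
    filter_upwards [eventually_ge_atTop N] with n hn
    rw [min_eq_left (hN.trans (by exact_mod_cast hn))]
  have hψ : Integrable (fun x => F x * mixLog F c t x) μ :=
    integrable_of_tendsto_of_monotone hint (hFm.mul (measurable_mixLog hFm)).aestronglyMeasurable
      (ae_of_all _ h_mono) (ae_of_all _ h_tendsto) hle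
  exact ⟨hψ, le_of_tendsto' (integral_tendsto_of_tendsto_of_monotone hint hψ
    (ae_of_all _ h_mono) (ae_of_all _ h_tendsto)) hle⟩

theorem integrable_mul_log_div_and_add_mul_log_le_of_forall_le [IsProbabilityMeasure μ]
    (hF0 : 0 ≤ F) (hFm : Measurable F) (hFi : Integrable F μ) (hc : ∫ x, F x ∂μ = c)
    (hc0 : 0 < c) (ht0 : 0 < t) (ht1 : t < 1) {M : ℝ}
    (hM : ∀ r ∈ entropyDualValues μ F, r ≤ M) :
    Integrable (fun x => F x * log (F x / c)) μ ∧
      ∫ x, F x * log (F x / c) ∂μ + c * log t ≤ M := by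
  obtain ⟨hψ, hψM⟩ := integrable_mul_mixLog_and_le_of_forall_le hF0 hFm hFi hc hc0 ht0.le ht1 hM
  have hmix_le := mul_log_div_add_mul_log_le_mul_mixLog hF0 hc0 ht0 ht1
  have hlower (x : Ω) : F x - c ≤ F x * log (F x / c) := by
    have h := mul_le_mul_log_div_sub_add_mul_exp (hF0 x) hc0 0
    rw [mul_zero, exp_zero, mul_one] at h
    linarith
  have hΦ : Integrable (fun x => F x * log (F x / c)) μ :=
    integrable_of_le_of_le
      (hFm.mul ((hFm.div_const c).log)).aestronglyMeasurable
      (ae_of_all _ hlower) (ae_of_all _ fun x => le_sub_iff_add_le.2 (hmix_le x))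
      (hFi.sub (integrable_const c)) (hψ.sub (hFi.mul_const _))
  refine ⟨hΦ, ?_⟩
  calc ∫ x, F x * log (F x / c) ∂μ + c * log t
      = ∫ x, (F x * log (F x / c) + F x * log t) ∂μ := by
        rw [integral_add hΦ (hFi.mul_const _), integral_mul_const, hc, mul_comm]
    _ ≤ ∫ x, F x * mixLog F c t x ∂μ := integral_mono (hΦ.add (hFi.mul_const _)) hψ hmix_le
    _ ≤ M := hψM

theorem integrable_mul_log_div_and_le_of_forall_le [IsProbabilityMeasure μ] (hF0 : 0 ≤ F)
    (hFm : Measurable F) (hFi : Integrable F μ) (hc : ∫ x, F x ∂μ = c) (hc0 : 0 < c) {M : ℝ}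
    (hM : ∀ r ∈ entropyDualValues μ F, r ≤ M) :
    Integrable (fun x => F x * log (F x / c)) μ ∧ ∫ x, F x * log (F x / c) ∂μ ≤ M := by
  have key {t : ℝ} (ht0 : 0 < t) (ht1 : t < 1) :=
    integrable_mul_log_div_and_add_mul_log_le_of_forall_le hF0 hFm hFi hc hc0 ht0 ht1 hM
  refine ⟨(key one_half_pos one_half_lt_one).1, le_of_forall_sub_le fun δ hδ => ?_⟩
  have hδc : -δ / c < 0 := div_neg_of_neg_of_pos (by linarith) hc0
  have h := (key (exp_pos (-δ / c)) (exp_lt_one_iff.2 hδc)).2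
  rwa [log_exp, mul_div_cancel₀ _ hc0.ne', ← sub_eq_add_neg] at h

theorem entropyDualValues_eq_singleton_zero [IsProbabilityMeasure μ] (hF : F =ᵐ[μ] 0) :
    entropyDualValues μ F = {0} := by
  ext r
  constructor
  · rintro ⟨g, -, -, -, -, rfl⟩
    refine integral_eq_zero_of_ae ?_
    filter_upwards [hF] with x hx
    simp [hx]
  · rintro rfl
    exact ⟨0, measurable_const, by simp, by simp, by simp, by simp⟩

theorem integral_mul_log_div_integral_eq_sSup [IsProbabilityMeasure μ] (hF0 : 0 ≤ F)
    (hFm : Measurable F) (hFi : Integrable F μ) :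
    ∫ x, F x * log (F x / ∫ y, F y ∂μ) ∂μ = sSup (entropyDualValues μ F) := by
  rcases (integral_nonneg hF0).eq_or_lt with hc0 | hc0
  · have hF : F =ᵐ[μ] 0 := (integral_eq_zero_iff_of_nonneg hF0 hFi).1 hc0.symm
    simp [entropyDualValues_eq_singleton_zero hF, ← hc0]
  have hne : (entropyDualValues μ F).Nonempty :=
    ⟨_, integral_mul_min_mixLog_mem_entropyDualValues hF0 hFm hFi rfl hc0 le_rfl zero_lt_one 0⟩
  have hle_of_int := le_integral_mul_log_of_mem_entropyDualValues hF0 hFi rfl hc0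
  by_cases hS : BddAbove (entropyDualValues μ F)
  · obtain ⟨hΦ, hle⟩ :=
      integrable_mul_log_div_and_le_of_forall_le hF0 hFm hFi rfl hc0 fun r hr => le_csSup hS hr
    exact le_antisymm hle (csSup_le hne fun r hr => hle_of_int hΦ hr)
  · have hΦ : ¬Integrable (fun x => F x * log (F x / ∫ y, F y ∂μ)) μ :=
      fun hΦ => hS ⟨_, fun r hr => hle_of_int hΦ hr⟩
    rw [integral_undef hΦ, Real.sSup_of_not_bddAbove hS]

end

theorem entropy_duality_general {Ω : Type*} [MeasurableSpace Ω] (μ : Measure Ω)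
    [IsProbabilityMeasure μ] (f : Ω → ℝ) (hfm : Measurable f)
    (hf2 : Integrable (fun x => f x ^ 2) μ) :
    ∫ x, f x ^ 2 * Real.log (f x ^ 2 / ∫ y, f y ^ 2 ∂μ) ∂μ
      = sSup {r : ℝ | ∃ g : Ω → ℝ, Measurable g ∧
          Integrable (fun x => Real.exp (g x)) μ ∧
          Integrable (fun x => f x ^ 2 * g x) μ ∧
          (∫ x, Real.exp (g x) ∂μ) ≤ 1 ∧
          r = ∫ x, f x ^ 2 * g x ∂μ} :=
  integral_mul_log_div_integral_eq_sSup (F := fun x => f x ^ 2) (fun x => sq_nonneg (f x))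
    (hfm.pow_const 2) hf2

/-- Duality formula for the entropy functional: for a nonnegative `f` with `E[f²] < ∞`
on a probability space, `E[f² log(f²/E[f²])]` equals the supremum of `E[f² g]` over
measurable `g` with `E[e^g] ≤ 1`. -/
theorem entropy_duality {Ω : Type*} [MeasurableSpace Ω] (μ : Measure Ω)
    [IsProbabilityMeasure μ] (f : Ω → ℝ) (hf : ∀ x, 0 ≤ f x) (hfm : Measurable f)
    (hf2 : Integrable (fun x => f x ^ 2) μ) :
    ∫ x, f x ^ 2 * Real.log (f x ^ 2 / ∫ y, f y ^ 2 ∂μ) ∂μ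
      = sSup {r : ℝ | ∃ g : Ω → ℝ, Measurable g ∧
          Integrable (fun x => Real.exp (g x)) μ ∧
          Integrable (fun x => f x ^ 2 * g x) μ ∧
          (∫ x, Real.exp (g x) ∂μ) ≤ 1 ∧
          r = ∫ x, f x ^ 2 * g x ∂μ} :=
  entropy_duality_general μ f hfm hf2
end

section
/- Let V : H_a → H_B ⊗ H_C be a linear map between finite-dimensional complex Hilbert spaces, W a unitary on H_a, and ψ ∈ H_a. If there exists a unitary W_B on H_B with ‖(W_B ⊗ I_C) V ψ − V W ψ‖ ≤ ε₁, then the decoupling condition holds: ‖tr_B(VWψ (VWψ)†) − tr_B(Vψ (Vψ)†)‖₁ ≤ √(2(‖Vψ‖² + ‖VWψ‖²)) · ε₁, where tr_B denotes the partial trace over H_B and ‖·‖₁ is the trace norm. -/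
open scoped ComplexOrder Matrix

/-- The Euclidean norm of a vector. -/
noncomputable def vecNorm {ι : Type*} [Fintype ι] (x : ι → ℂ) : ℝ :=
  Real.sqrt (∑ i, ‖x i‖ ^ 2)

/-- The (unnormalized) rank-one operator `|x⟩⟨x|`, as a matrix. -/
noncomputable def outerProd {ι : Type*} (x : ι → ℂ) : Matrix ι ι ℂ :=
  Matrix.of fun i j => x i * (starRingEnd ℂ) (x j)

/-- The partial trace over the first (`B`) factor of an operator on `H_B ⊗ H_C`. -/
noncomputable def ptraceB {b c : Type*} [Fintype b]
    (M : Matrix (b × c) (b × c) ℂ) : Matrix c c ℂ :=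
  Matrix.of fun i j => ∑ k : b, M (k, i) (k, j)

/-- The trace norm `‖A‖₁ = tr √(AᴴA)` (sum of singular values). -/
noncomputable def traceNorm {n : Type*} [Fintype n] [DecidableEq n]
    (A : Matrix n n ℂ) : ℝ :=
  (((Matrix.posSemidef_conjTranspose_mul_self A).1.eigenvectorUnitary : Matrix n n ℂ) *
      Matrix.diagonal ((fun r : ℝ => (r : ℂ)) ∘ (√·) ∘ (Matrix.posSemidef_conjTranspose_mul_self A).1.eigenvalues) *
      (star (Matrix.posSemidef_conjTranspose_mul_self A).1.eigenvectorUnitary : Matrix n n ℂ)).trace.re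

/-!
Put `u = (W_B ⊗ I_C) V ψ` and `v = V W ψ`. Conjugation by `W_B ⊗ I_C` does not change the partial
trace over `B`, so `tr_B |Vψ⟩⟨Vψ| = tr_B |u⟩⟨u|`, and since the trace norm does not increase under
partial trace, the left-hand side is at most `‖|v⟩⟨v| - |u⟩⟨u|‖₁`. For a Hermitian `A` one has
`‖A‖₁ = Re tr (A Y)` with the unitary `Y = sign A`, and `Re tr (A Z) ≤ ‖A‖₁` for every unitary `Z`.
For `A = |v⟩⟨v| - |u⟩⟨u|` this gives `‖A‖₁ ≤ |⟨v, Y v⟩ - ⟨u, Y u⟩| ≤ ‖v - u‖ (‖v‖ + ‖u‖)`,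
and `‖u‖ = ‖Vψ‖`, `‖v - u‖ ≤ ε₁`.
-/

open scoped MatrixOrder Kronecker
open Matrix

section TraceNorm

variable {n : Type*} [Fintype n] [DecidableEq n]

theorem traceNorm_eq_re_trace_abs (A : Matrix n n ℂ) : traceNorm A = (CFC.abs A).trace.re := by
  have hB := posSemidef_conjTranspose_mul_self A
  have habs : CFC.abs A = hB.1.cfc Real.sqrt := by
    rw [CFC.abs, star_eq_conjTranspose, CFC.sqrt_eq_real_sqrt _ hB.nonneg, cfcₙ_eq_cfc, hB.1.cfc_eq]
  rw [habs]
  rfl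

theorem Matrix.IsHermitian.trace_cfc {A : Matrix n n ℂ} (hA : A.IsHermitian) (f : ℝ → ℝ) :
    (cfc f A).trace = ∑ i, (f (hA.eigenvalues i) : ℂ) := by
  rw [hA.cfc_eq, IsHermitian.cfc, Unitary.conjStarAlgAut_apply, trace_mul_cycle,
    Unitary.star_mul_self_of_mem hA.eigenvectorUnitary.2, one_mul, trace_diagonal]
  rfl

theorem Matrix.IsHermitian.traceNorm_eq_sum_abs_eigenvalues {A : Matrix n n ℂ}
    (hA : A.IsHermitian) : traceNorm A = ∑ i, |hA.eigenvalues i| := by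
  rw [traceNorm_eq_re_trace_abs, CFC.abs_eq_cfc_norm A hA.isSelfAdjoint, hA.trace_cfc]
  simp [Complex.re_sum]

theorem Matrix.IsHermitian.re_trace_mul_le_traceNorm {A Z : Matrix n n ℂ} (hA : A.IsHermitian)
    (hZ : Z ∈ unitary (Matrix n n ℂ)) : (A * Z).trace.re ≤ traceNorm A := by
  obtain ⟨U, hU, hspec⟩ : ∃ U ∈ unitary (Matrix n n ℂ),
      A = U * diagonal (Complex.ofReal ∘ hA.eigenvalues) * star U :=
    ⟨_, hA.eigenvectorUnitary.2, hA.spectral_theorem⟩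
  have hUZU : star U * Z * U ∈ unitaryGroup n ℂ :=
    mul_mem (mul_mem (Unitary.star_mem hU) hZ) hU
  have htrace : (A * Z).trace = ∑ i, (hA.eigenvalues i : ℂ) * (star U * Z * U) i i := by
    calc (A * Z).trace
        = (U * (diagonal (Complex.ofReal ∘ hA.eigenvalues) * (star U * Z))).trace := by
          simp only [congrArg (· * Z) hspec, mul_assoc]
      _ = (diagonal (Complex.ofReal ∘ hA.eigenvalues) * (star U * Z * U)).trace := by
          rw [trace_mul_comm, mul_assoc]
      _ = _ := by simp [trace, diagonal_mul]
  rw [htrace, hA.traceNorm_eq_sum_abs_eigenvalues, Complex.re_sum]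
  refine Finset.sum_le_sum fun i _ => ?_
  calc ((hA.eigenvalues i : ℂ) * (star U * Z * U) i i).re
      ≤ ‖(hA.eigenvalues i : ℂ) * (star U * Z * U) i i‖ := Complex.re_le_norm _
    _ ≤ |hA.eigenvalues i| * 1 := by
        rw [norm_mul, Complex.norm_real, Real.norm_eq_abs]
        gcongr
        exact entry_norm_bound_of_unitary hUZU i i
    _ = |hA.eigenvalues i| := mul_one _

theorem Matrix.IsHermitian.exists_mem_unitary_traceNorm_eq {A : Matrix n n ℂ}
    (hA : A.IsHermitian) : ∃ Y ∈ unitary (Matrix n n ℂ), traceNorm A = (A * Y).trace.re := by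
  let sign : ℝ → ℝ := fun x => if 0 ≤ x then 1 else -1
  -- `sign` is discontinuous, but every function is continuous on the finite spectrum of a matrix.
  have hcont : ∀ f : ℝ → ℝ, ContinuousOn f (spectrum ℝ A) :=
    fun f => A.finite_real_spectrum.continuousOn f
  refine ⟨cfc sign A, ?_, ?_⟩
  · rw [cfc_unitary_iff sign A hA.isSelfAdjoint (hcont sign)]
    intro x _
    by_cases hx : 0 ≤ x <;> simp [sign, hx]
  · have : A * cfc sign A = CFC.abs A := by
      rw [CFC.abs_eq_cfc_norm A hA.isSelfAdjoint]
      nth_rw 1 [← cfc_id' ℝ A hA.isSelfAdjoint]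
      rw [← cfc_mul _ _ A (hcont _) (hcont _)]
      refine cfc_congr fun x _ => ?_
      by_cases hx : 0 ≤ x <;> simp [sign, hx, abs_of_nonneg, abs_of_neg, not_le.mp]
    rw [this, traceNorm_eq_re_trace_abs]

end TraceNorm

section PartialTrace

variable {b c : Type*} [Fintype b]

theorem ptraceB_sub (M N : Matrix (b × c) (b × c) ℂ) :
    ptraceB (M - N) = ptraceB M - ptraceB N := by
  ext i j
  simp [ptraceB, Finset.sum_sub_distrib]

theorem Matrix.IsHermitian.ptraceB {M : Matrix (b × c) (b × c) ℂ} (hM : M.IsHermitian) :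
    (ptraceB M).IsHermitian := by
  ext i j
  simp only [conjTranspose_apply, _root_.ptraceB, of_apply, star_sum, hM.apply]

variable [Fintype c]

theorem trace_ptraceB_mul [DecidableEq b] (M : Matrix (b × c) (b × c) ℂ) (Y : Matrix c c ℂ) :
    (ptraceB M * Y).trace = (M * (1 ⊗ₖ Y)).trace := by
  simp only [trace, diag, mul_apply, ptraceB, of_apply, kroneckerMap_apply, one_apply,
    Fintype.sum_prod_type, ite_mul, one_mul, zero_mul, mul_ite, mul_zero, Finset.sum_mul,
    Finset.sum_ite_irrel, Finset.sum_const_zero, Finset.sum_ite_eq', Finset.mem_univ, if_true]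
  symm
  rw [Finset.sum_comm]
  exact Finset.sum_congr rfl fun _ _ => Finset.sum_comm

theorem ptraceB_mul_kronecker_one_comm [DecidableEq c] (M : Matrix (b × c) (b × c) ℂ)
    (A : Matrix b b ℂ) :
    ptraceB (M * (A ⊗ₖ 1)) = ptraceB ((A ⊗ₖ 1) * M) := by
  ext i j
  simp only [ptraceB, of_apply, mul_apply, kroneckerMap_apply, one_apply, Fintype.sum_prod_type,
    mul_ite, ite_mul, mul_one, mul_zero, zero_mul, Finset.sum_ite_eq, Finset.sum_ite_eq',
    Finset.mem_univ, if_true]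
  rw [Finset.sum_comm]
  exact Finset.sum_congr rfl fun _ _ => Finset.sum_congr rfl fun _ _ => mul_comm _ _

theorem ptraceB_conj_kronecker_one [DecidableEq b] [DecidableEq c]
    (M : Matrix (b × c) (b × c) ℂ) {A : Matrix b b ℂ} (hA : A ∈ unitary (Matrix b b ℂ)) :
    ptraceB ((A ⊗ₖ 1) * M * (A ⊗ₖ 1)ᴴ) = ptraceB M := by
  rw [conjTranspose_kronecker, conjTranspose_one, ← star_eq_conjTranspose,
    ptraceB_mul_kronecker_one_comm, ← mul_assoc, ← mul_kronecker_mul, one_mul,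
    Unitary.star_mul_self_of_mem hA, one_kronecker_one, one_mul]

theorem traceNorm_ptraceB_le [DecidableEq b] [DecidableEq c] {M : Matrix (b × c) (b × c) ℂ}
    (hM : M.IsHermitian) : traceNorm (ptraceB M) ≤ traceNorm M := by
  obtain ⟨Y, hY, hYnorm⟩ := hM.ptraceB.exists_mem_unitary_traceNorm_eq
  rw [hYnorm, trace_ptraceB_mul]
  exact hM.re_trace_mul_le_traceNorm (kronecker_mem_unitary (one_mem _) hY)

end PartialTrace

section PureStates

variable {n : Type*}

theorem isHermitian_outerProd (x : n → ℂ) : (outerProd x).IsHermitian := by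
  ext i j
  simp [outerProd, mul_comm]

variable [Fintype n]

theorem vecNorm_eq_norm_toLp (x : n → ℂ) : vecNorm x = ‖WithLp.toLp 2 x‖ := by
  rw [EuclideanSpace.norm_eq]
  rfl

theorem vecNorm_nonneg (x : n → ℂ) : 0 ≤ vecNorm x :=
  Real.sqrt_nonneg _

theorem vecNorm_sub_comm (x y : n → ℂ) : vecNorm (x - y) = vecNorm (y - x) := by
  simp only [vecNorm_eq_norm_toLp, WithLp.toLp_sub, norm_sub_rev]

theorem norm_star_dotProduct_le (x y : n → ℂ) : ‖star x ⬝ᵥ y‖ ≤ vecNorm x * vecNorm y := by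
  rw [vecNorm_eq_norm_toLp, vecNorm_eq_norm_toLp, dotProduct_comm, ← EuclideanSpace.inner_toLp_toLp]
  exact norm_inner_le_norm _ _

theorem vecNorm_mulVec_of_mem_unitary [DecidableEq n] {U : Matrix n n ℂ}
    (hU : U ∈ unitary (Matrix n n ℂ)) (x : n → ℂ) : vecNorm (U *ᵥ x) = vecNorm x := by
  have hinner : star (U *ᵥ x) ⬝ᵥ U *ᵥ x = star x ⬝ᵥ x := by
    rw [star_mulVec, dotProduct_mulVec, vecMul_vecMul, ← star_eq_conjTranspose,
      Unitary.star_mul_self_of_mem hU, vecMul_one]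
  rw [vecNorm_eq_norm_toLp, vecNorm_eq_norm_toLp, ← sq_eq_sq₀ (norm_nonneg _) (norm_nonneg _),
    @norm_sq_eq_re_inner ℂ, @norm_sq_eq_re_inner ℂ, EuclideanSpace.inner_toLp_toLp,
    EuclideanSpace.inner_toLp_toLp, dotProduct_comm (U *ᵥ x), hinner, dotProduct_comm]

theorem outerProd_mulVec {m : Type*} [Fintype m] (A : Matrix m n ℂ) (x : n → ℂ) :
    outerProd (A *ᵥ x) = A * outerProd x * Aᴴ := by
  ext i j
  simp [outerProd, mul_apply, mulVec, dotProduct, Finset.sum_mul, Finset.mul_sum, mul_comm,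
    mul_left_comm, mul_assoc]

theorem trace_outerProd_mul (x : n → ℂ) (Z : Matrix n n ℂ) :
    (outerProd x * Z).trace = star x ⬝ᵥ Z *ᵥ x := by
  simp only [trace, diag, mul_apply, outerProd, of_apply, dotProduct, mulVec, Pi.star_apply,
    Finset.mul_sum]
  rw [Finset.sum_comm]
  refine Finset.sum_congr rfl fun _ _ => Finset.sum_congr rfl fun _ _ => ?_
  rw [Complex.star_def]
  ring

theorem norm_star_dotProduct_mulVec_sub_le [DecidableEq n] {Z : Matrix n n ℂ}
    (hZ : Z ∈ unitary (Matrix n n ℂ)) (u v : n → ℂ) :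
    ‖star v ⬝ᵥ Z *ᵥ v - star u ⬝ᵥ Z *ᵥ u‖ ≤ vecNorm (v - u) * (vecNorm v + vecNorm u) := by
  have hsplit : star v ⬝ᵥ Z *ᵥ v - star u ⬝ᵥ Z *ᵥ u
      = star (v - u) ⬝ᵥ Z *ᵥ v + star u ⬝ᵥ Z *ᵥ (v - u) := by
    rw [star_sub, sub_dotProduct, mulVec_sub, dotProduct_sub]
    ring
  calc ‖star v ⬝ᵥ Z *ᵥ v - star u ⬝ᵥ Z *ᵥ u‖
      ≤ ‖star (v - u) ⬝ᵥ Z *ᵥ v‖ + ‖star u ⬝ᵥ Z *ᵥ (v - u)‖ := hsplit ▸ norm_add_le _ _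
    _ ≤ vecNorm (v - u) * vecNorm (Z *ᵥ v) + vecNorm u * vecNorm (Z *ᵥ (v - u)) := by
        gcongr <;> exact norm_star_dotProduct_le _ _
    _ = vecNorm (v - u) * (vecNorm v + vecNorm u) := by
        rw [vecNorm_mulVec_of_mem_unitary hZ, vecNorm_mulVec_of_mem_unitary hZ]
        ring

theorem traceNorm_outerProd_sub_le [DecidableEq n] (u v : n → ℂ) :
    traceNorm (outerProd v - outerProd u)
      ≤ √(2 * (vecNorm u ^ 2 + vecNorm v ^ 2)) * vecNorm (v - u) := by
  obtain ⟨Y, hY, hnorm⟩ :=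
    ((isHermitian_outerProd v).sub (isHermitian_outerProd u)).exists_mem_unitary_traceNorm_eq
  have hsum : vecNorm v + vecNorm u ≤ √(2 * (vecNorm u ^ 2 + vecNorm v ^ 2)) :=
    Real.le_sqrt_of_sq_le (by nlinarith [sq_nonneg (vecNorm v - vecNorm u)])
  calc traceNorm (outerProd v - outerProd u)
      = (star v ⬝ᵥ Y *ᵥ v - star u ⬝ᵥ Y *ᵥ u).re := by
        rw [hnorm, sub_mul, trace_sub, trace_outerProd_mul, trace_outerProd_mul]
    _ ≤ ‖star v ⬝ᵥ Y *ᵥ v - star u ⬝ᵥ Y *ᵥ u‖ := Complex.re_le_norm _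
    _ ≤ vecNorm (v - u) * (vecNorm v + vecNorm u) := norm_star_dotProduct_mulVec_sub_le hY u v
    _ ≤ √(2 * (vecNorm u ^ 2 + vecNorm v ^ 2)) * vecNorm (v - u) := by
        rw [mul_comm]
        exact mul_le_mul_of_nonneg_right hsum (vecNorm_nonneg _)

end PureStates

theorem decoupling_of_reconstruction_general {a b c : Type*}
    [Fintype a] [Fintype b] [DecidableEq b] [Fintype c] [DecidableEq c]
    (V : Matrix (b × c) a ℂ) (W : Matrix a a ℂ)
    (ψ : a → ℂ) (ε₁ : ℝ)
    (WB : Matrix b b ℂ) (hWB : WB ∈ unitary (Matrix b b ℂ))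
    (hrec : vecNorm
        ((Matrix.kroneckerMap (· * ·) WB (1 : Matrix c c ℂ)).mulVec (V.mulVec ψ)
          - V.mulVec (W.mulVec ψ)) ≤ ε₁) :
    traceNorm (ptraceB (outerProd (V.mulVec (W.mulVec ψ)))
        - ptraceB (outerProd (V.mulVec ψ)))
      ≤ Real.sqrt (2 * (vecNorm (V.mulVec ψ) ^ 2 + vecNorm (V.mulVec (W.mulVec ψ)) ^ 2))
          * ε₁ := by
  set φ := V *ᵥ ψ
  set v := V *ᵥ (W *ᵥ ψ)
  have hK : WB ⊗ₖ (1 : Matrix c c ℂ) ∈ unitary (Matrix (b × c) (b × c) ℂ) :=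
    kronecker_mem_unitary hWB (one_mem _)
  set u := (WB ⊗ₖ (1 : Matrix c c ℂ)) *ᵥ φ
  have hreduce : ptraceB (outerProd u) = ptraceB (outerProd φ) := by
    rw [← ptraceB_conj_kronecker_one (outerProd φ) hWB, ← outerProd_mulVec]
  calc traceNorm (ptraceB (outerProd v) - ptraceB (outerProd φ))
      = traceNorm (ptraceB (outerProd v - outerProd u)) := by rw [← hreduce, ptraceB_sub]
    _ ≤ traceNorm (outerProd v - outerProd u) :=
        traceNorm_ptraceB_le ((isHermitian_outerProd v).sub (isHermitian_outerProd u))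
    _ ≤ √(2 * (vecNorm u ^ 2 + vecNorm v ^ 2)) * vecNorm (v - u) :=
        traceNorm_outerProd_sub_le u v
    _ ≤ √(2 * (vecNorm φ ^ 2 + vecNorm v ^ 2)) * ε₁ := by
        rw [vecNorm_mulVec_of_mem_unitary hK, vecNorm_sub_comm]
        gcongr

/-- The forward direction of the decoupling theorem: if an interior unitary `W` can be
reconstructed by a unitary `W_B ⊗ I_C` up to error `ε₁` on the encoded state `Vψ`, then
the reduced states on `C` of the encodings of `Wψ` and `ψ` are close in trace norm:
`‖tr_B(VWψ (VWψ)†) − tr_B(Vψ (Vψ)†)‖₁ ≤ √(2(‖Vψ‖² + ‖VWψ‖²)) · ε₁`. -/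
theorem decoupling_of_reconstruction {a b c : Type*}
    [Fintype a] [DecidableEq a] [Fintype b] [DecidableEq b] [Fintype c] [DecidableEq c]
    (V : Matrix (b × c) a ℂ) (W : Matrix a a ℂ) (hW : W ∈ unitary (Matrix a a ℂ))
    (ψ : a → ℂ) (ε₁ : ℝ)
    (WB : Matrix b b ℂ) (hWB : WB ∈ unitary (Matrix b b ℂ))
    (hrec : vecNorm
        ((Matrix.kroneckerMap (· * ·) WB (1 : Matrix c c ℂ)).mulVec (V.mulVec ψ)
          - V.mulVec (W.mulVec ψ)) ≤ ε₁) :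
    traceNorm (ptraceB (outerProd (V.mulVec (W.mulVec ψ)))
        - ptraceB (outerProd (V.mulVec ψ)))
      ≤ Real.sqrt (2 * (vecNorm (V.mulVec ψ) ^ 2 + vecNorm (V.mulVec (W.mulVec ψ)) ^ 2))
          * ε₁ :=
  decoupling_of_reconstruction_general V W ψ ε₁ WB hWB hrec
end
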